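/- arXiv:1606.08042 — 8 statements merged into one kernel-verified Lean document; each statement's English description precedes it below -/
import Mathlib

section
/- Let a₁, a₂ be coprime positive integers with a₁ < a₂, and let x be a positive integer with x < a₁·a₂. Then x can be written as α·a₁ − β·a₂ or α·a₂ − β·a₁ with 0 < α, 0 < β (integers, α < a₂ resp. α < a₁, β < a₁ resp. β < a₂) if and only if x is not representable as a nonnegative integer combination of a₁ and a₂. -/
/-!
If `α * a₁ - β * a₂ = l₁ * a₁ + l₂ * a₂` with `l₁, l₂ ≥ 0`, then `a₂` divides the positive
number `α - l₁`, which is impossible for `α < a₂`. Conversely, coprimality lets us write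
`x = α * a₁ + c * a₂` with `0 ≤ α < a₂`; if `x` is not a nonnegative combination then `c < 0`,
and `0 < x < α * a₁ < a₁ * a₂` forces `0 < α` and `-c < a₁`.
-/

theorem IsCoprime.mul_sub_mul_ne_natCast_mul_add_natCast_mul {a b : ℤ} (hab : IsCoprime a b)
    (ha : 0 < a) (hb : 0 < b) {α β : ℤ} (hα : α < b) (hβ : 0 < β) (l₁ l₂ : ℕ) :
    α * a - β * b ≠ l₁ * a + l₂ * b := by
  intro h
  have key : (α - l₁) * a = (β + l₂) * b := by linarith
  have hdvd : b ∣ α - l₁ := hab.symm.dvd_of_dvd_mul_right ⟨β + l₂, by linarith⟩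
  have hpos : 0 < α - l₁ := by
    refine pos_of_mul_pos_left (b := a) ?_ ha.le
    rw [key]
    positivity
  linarith [Int.le_of_dvd hpos hdvd, Int.natCast_nonneg l₁]

theorem IsCoprime.exists_eq_mul_add_mul_of_pos {a b : ℤ} (hab : IsCoprime a b) (hb : 0 < b)
    (x : ℤ) : ∃ α c : ℤ, 0 ≤ α ∧ α < b ∧ x = α * a + c * b := by
  obtain ⟨u, v, huv⟩ := hab
  refine ⟨x * u % b, x * u / b * a + x * v, Int.emod_nonneg _ hb.ne', Int.emod_lt_of_pos _ hb, ?_⟩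
  linear_combination (-x) * huv - a * Int.emod_add_mul_ediv (x * u) b

theorem stmt_1_general (a₁ a₂ : ℤ) (h₁ : 1 ≤ a₁) (h₂ : 1 ≤ a₂)
    (hcop : IsCoprime a₁ a₂) (x : ℤ) (hx : 0 < x) :
    ((∃ α β : ℤ, 0 < α ∧ α < a₂ ∧ 0 < β ∧ β < a₁ ∧ x = α * a₁ - β * a₂) ∨
     (∃ α β : ℤ, 0 < α ∧ α < a₁ ∧ 0 < β ∧ β < a₂ ∧ x = α * a₂ - β * a₁)) ↔
    ¬ ∃ l₁ l₂ : ℕ, x = (l₁ : ℤ) * a₁ + (l₂ : ℤ) * a₂ := by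
  have ha₁ : 0 < a₁ := by omega
  have ha₂ : 0 < a₂ := by omega
  constructor
  · rintro (⟨α, β, -, hα, hβ, -, rfl⟩ | ⟨α, β, -, hα, hβ, -, rfl⟩) ⟨l₁, l₂, h⟩
    · exact hcop.mul_sub_mul_ne_natCast_mul_add_natCast_mul ha₁ ha₂ hα hβ l₁ l₂ h
    · exact hcop.symm.mul_sub_mul_ne_natCast_mul_add_natCast_mul ha₂ ha₁ hα hβ l₂ l₁
        (by rw [h]; ring)
  · intro hnrep
    obtain ⟨α, c, hα₀, hα, rfl⟩ := hcop.exists_eq_mul_add_mul_of_pos ha₂ x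
    have hc : c < 0 := by
      by_contra! hc
      exact hnrep ⟨α.toNat, c.toNat, by simp [hα₀, hc]⟩
    refine Or.inl ⟨α, -c, by nlinarith, hα, by linarith, by nlinarith, by ring⟩

theorem stmt_1 (a₁ a₂ : ℤ) (h₁ : 1 ≤ a₁) (h₂ : 1 ≤ a₂) (hlt : a₁ < a₂)
    (hcop : IsCoprime a₁ a₂) (x : ℤ) (hx : 0 < x) (hxlt : x < a₁ * a₂) :
    ((∃ α β : ℤ, 0 < α ∧ α < a₂ ∧ 0 < β ∧ β < a₁ ∧ x = α * a₁ - β * a₂) ∨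
     (∃ α β : ℤ, 0 < α ∧ α < a₁ ∧ 0 < β ∧ β < a₂ ∧ x = α * a₂ - β * a₁)) ↔
    ¬ ∃ l₁ l₂ : ℕ, x = (l₁ : ℤ) * a₁ + (l₂ : ℤ) * a₂ :=
  stmt_1_general a₁ a₂ h₁ h₂ hcop x hx
end

section
/- Let a₁, a₂ be coprime positive integers, both greater than 1. If x is a positive integer with 0 < x < a₁·a₂, x is not divisible by a₁, and x is not divisible by a₂, then exactly one of x and a₁·a₂ − x belongs to the numerical semigroup generated by a₁ and a₂. -/
/-!
Choose `u < a₂` with `u * a₁ ≡ x [MOD a₂]`. If `u * a₁ ≤ x`, then `x = u * a₁ + c * a₂`;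
otherwise `u * a₁ - x = c * a₂` and `a₁ * a₂ - x = (a₂ - u) * a₁ + c * a₂`. Conversely, adding
representations of `x` and of `a₁ * a₂ - x` gives one of `a₁ * a₂`, and by coprimality the only
representations of `a₁ * a₂` are `a₂ * a₁ + 0 * a₂` and `0 * a₁ + a₁ * a₂`, so the representation
of `x` uses a single generator.
-/

namespace Nat.Coprime

variable {a b : ℕ}

theorem exists_comb_or_exists_comb_mul_sub (cop : Coprime a b) (hb : b ≠ 0) (x : ℕ) :
    (∃ l₁ l₂ : ℕ, x = l₁ * a + l₂ * b) ∨ (∃ l₁ l₂ : ℕ, a * b - x = l₁ * a + l₂ * b) := by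
  obtain ⟨u, hub, hu⟩ := Nat.exists_mul_mod_eq_of_coprime x cop hb
  have hmod : a * u ≡ x [MOD b] := hu
  rcases le_total (a * u) x with hle | hlt
  · obtain ⟨c, hc⟩ := (Nat.modEq_iff_dvd' hle).mp hmod
    exact .inl ⟨u, c, by rw [mul_comm u, mul_comm c]; omega⟩
  · obtain ⟨c, hc⟩ := (Nat.modEq_iff_dvd' hlt).mp hmod.symm
    have hsplit : a * b = a * (b - u) + a * u := by
      rw [← Nat.mul_add, Nat.sub_add_cancel hub.le]
    exact .inr ⟨b - u, c, by rw [mul_comm (b - u), mul_comm c]; omega⟩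

theorem dvd_or_dvd_of_comb_of_comb_mul_sub (cop : Coprime a b) {x : ℕ} (hx : x ≤ a * b)
    (hcomb : ∃ l₁ l₂ : ℕ, x = l₁ * a + l₂ * b)
    (hcomb' : ∃ l₁ l₂ : ℕ, a * b - x = l₁ * a + l₂ * b) : a ∣ x ∨ b ∣ x := by
  obtain ⟨l₁, l₂, rfl⟩ := hcomb
  obtain ⟨m₁, m₂, hm⟩ := hcomb'
  have hsum : (l₁ + m₁) * a + (l₂ + m₂) * b = a * b := by
    rw [add_mul, add_mul]; omega
  by_contra! hndvd
  refine cop.mul_add_mul_ne_mul ?_ ?_ hsum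
  · intro h
    exact hndvd.2 ⟨l₂, by rw [show l₁ = 0 by omega]; ring⟩
  · intro h
    exact hndvd.1 ⟨l₁, by rw [show l₂ = 0 by omega]; ring⟩

end Nat.Coprime

theorem stmt_2_general (a₁ a₂ : ℕ)
    (hcop : Nat.gcd a₁ a₂ = 1) (x : ℕ) (hxlt : x < a₁ * a₂)
    (hd₁ : ¬ a₁ ∣ x) (hd₂ : ¬ a₂ ∣ x) :
    Xor' (∃ l₁ l₂ : ℕ, x = l₁ * a₁ + l₂ * a₂)
         (∃ l₁ l₂ : ℕ, a₁ * a₂ - x = l₁ * a₁ + l₂ * a₂) := by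
  have ha₂ : a₂ ≠ 0 := by rintro rfl; simp at hxlt
  refine (xor_iff_or_and_not_and _ _).mpr
    ⟨Nat.Coprime.exists_comb_or_exists_comb_mul_sub hcop ha₂ x, fun ⟨hcomb, hcomb'⟩ => ?_⟩
  rcases Nat.Coprime.dvd_or_dvd_of_comb_of_comb_mul_sub hcop hxlt.le hcomb hcomb' with h | h
  exacts [hd₁ h, hd₂ h]

theorem stmt_2 (a₁ a₂ : ℕ) (h₁ : 1 < a₁) (h₂ : 1 < a₂)
    (hcop : Nat.gcd a₁ a₂ = 1) (x : ℕ) (hx : 0 < x) (hxlt : x < a₁ * a₂)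
    (hd₁ : ¬ a₁ ∣ x) (hd₂ : ¬ a₂ ∣ x) :
    Xor' (∃ l₁ l₂ : ℕ, x = l₁ * a₁ + l₂ * a₂)
         (∃ l₁ l₂ : ℕ, a₁ * a₂ - x = l₁ * a₁ + l₂ * a₂) :=
  stmt_2_general a₁ a₂ hcop x hxlt hd₁ hd₂
end

section
/- Let a₁, a₂ be coprime integers greater than 1. The number of positive integers less than a₁·a₂ that are not representable as a nonnegative integer combination of a₁ and a₂ equals (a₁−1)(a₂−1)/2. -/
/-!
Write `F = a₁ a₂ - a₁ - a₂`; every non-representable integer is at most `F` (Sylvester). On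
`[0, F]` the reflection `k ↦ F - k` exchanges representable and non-representable numbers: two
representable numbers cannot sum to the non-representable `F`, and a non-representable `k` can be
written `k = x a₁ - (m + 1) a₂` with `0 ≤ x < a₂`, whence `F - k = (a₂ - 1 - x) a₁ + m a₂`. So
exactly half of the `F + 1 = (a₁ - 1)(a₂ - 1)` numbers in `[0, F]` are non-representable, and
`0` is not among them.
-/

open Finset

theorem Finset.card_filter_range_succ_eq_half_of_reflect {p : ℕ → Prop} [DecidablePred p] {n : ℕ}
    (h : ∀ k ≤ n, p (n - k) ↔ ¬ p k) : #{k ∈ range (n + 1) | p k} = (n + 1) / 2 := by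
  have hswap : #{k ∈ range (n + 1) | p k} = #{k ∈ range (n + 1) | ¬ p k} := by
    refine card_nbij' (n - ·) (n - ·) ?_ ?_ ?_ ?_ <;>
      simp only [coe_filter, mem_range, Set.MapsTo, Set.LeftInvOn, Set.mem_ofPred_eq] <;>
      intro k ⟨hkn, hk⟩
    · exact ⟨by omega, fun hp => (h k (by omega)).1 hp hk⟩
    · exact ⟨by omega, (h k (by omega)).2 hk⟩
    · omega
    · omega
  have hsum : #{k ∈ range (n + 1) | p k} + #{k ∈ range (n + 1) | ¬ p k} = n + 1 := by
    rw [card_filter_add_card_filter_not, card_range]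
  omega

theorem Int.exists_eq_mul_add_mul_of_isCoprime {a b : ℤ} (h : IsCoprime a b) (hb : 0 < b)
    (k : ℤ) : ∃ x y, 0 ≤ x ∧ x < b ∧ k = x * a + y * b := by
  obtain ⟨u, v, huv⟩ := h
  refine ⟨k * u % b, k * v + k * u / b * a, Int.emod_nonneg _ hb.ne', Int.emod_lt_of_pos _ hb, ?_⟩
  linear_combination (-k) * huv - a * Int.emod_add_mul_ediv (k * u) b

theorem AddSubmonoid.mem_closure_pair_iff_exists_eq_mul_add_mul {a b x : ℕ} :
    x ∈ closure {a, b} ↔ ∃ l₁ l₂ : ℕ, x = l₁ * a + l₂ * b := by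
  simp only [mem_closure_pair, smul_eq_mul, eq_comm]

theorem Nat.exists_add_mul_eq_mul_of_notMem_closure_pair {a b k : ℕ} (hab : a.Coprime b)
    (hb : 0 < b) (hk : k ∉ AddSubmonoid.closure {a, b}) :
    ∃ x < b, ∃ m : ℕ, k + (m + 1) * b = x * a := by
  obtain ⟨x, y, hx0, hxb, hxy⟩ :=
    Int.exists_eq_mul_add_mul_of_isCoprime (Nat.isCoprime_iff_coprime.2 hab) (by omega) k
  lift x to ℕ using hx0
  rcases le_or_gt 0 y with hy | hy
  · lift y to ℕ using hy
    exact absurd (AddSubmonoid.mem_closure_pair_iff_exists_eq_mul_add_mul.2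
      ⟨x, y, by exact_mod_cast hxy⟩) hk
  · obtain ⟨m, hm⟩ := Int.exists_eq_neg_ofNat (show y + 1 ≤ 0 by omega)
    refine ⟨x, by omega, m, ?_⟩
    have hm' : (k : ℤ) + (m + 1) * b = x * a := by linear_combination hxy + (b : ℤ) * hm
    exact_mod_cast hm'

theorem Nat.sub_sub_sub_mem_closure_pair_iff_notMem {a b k : ℕ} (hab : a.Coprime b) (ha : 1 < a)
    (hb : 1 < b) (hk : k ≤ a * b - a - b) :
    a * b - a - b - k ∈ AddSubmonoid.closure {a, b} ↔ k ∉ AddSubmonoid.closure {a, b} := by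
  constructor
  · intro hsub hk'
    have hF := add_mem hsub hk'
    rw [Nat.sub_add_cancel hk] at hF
    exact (frobeniusNumber_pair hab ha hb).1 hF
  · intro hk'
    obtain ⟨x, hxb, m, hxm⟩ := exists_add_mul_eq_mul_of_notMem_closure_pair hab (by omega) hk'
    refine AddSubmonoid.mem_closure_pair_iff_exists_eq_mul_add_mul.2 ⟨b - 1 - x, m, ?_⟩
    have hsum : (b - 1 - x) * a + m * b + k + a + b = a * b := by
      zify [show x ≤ b - 1 by omega, hb.le] at hxm ⊢
      linear_combination hxm
    omega

theorem stmt_3 (a₁ a₂ : ℕ) (h₁ : 1 < a₁) (h₂ : 1 < a₂)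
    (hcop : Nat.gcd a₁ a₂ = 1) :
    {x : ℕ | 0 < x ∧ x < a₁ * a₂ ∧ ¬ ∃ l₁ l₂ : ℕ, x = l₁ * a₁ + l₂ * a₂}.ncard
      = (a₁ - 1) * (a₂ - 1) / 2 := by
  classical
  set S := AddSubmonoid.closure {a₁, a₂}
  have hle : a₁ + a₂ ≤ a₁ * a₂ := add_le_mul h₁ h₂
  have hF : (a₁ - 1) * (a₂ - 1) = a₁ * a₂ - a₁ - a₂ + 1 := by
    have hsum : (a₁ - 1) * (a₂ - 1) + a₁ + a₂ = a₁ * a₂ + 1 := by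
      zify [h₁.le, h₂.le]
      ring
    omega
  set F := a₁ * a₂ - a₁ - a₂
  have hset : {x : ℕ | 0 < x ∧ x < a₁ * a₂ ∧ ¬ ∃ l₁ l₂ : ℕ, x = l₁ * a₁ + l₂ * a₂} =
      ↑{k ∈ range (F + 1) | k ∉ S} := by
    ext x
    simp only [← AddSubmonoid.mem_closure_pair_iff_exists_eq_mul_add_mul, Set.mem_ofPred_eq,
      coe_filter, mem_range]
    constructor
    · rintro ⟨-, -, hx⟩
      exact ⟨Nat.lt_succ_of_le ((frobeniusNumber_pair hcop h₁ h₂).2 hx), hx⟩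
    · rintro ⟨hxF, hx⟩
      refine ⟨Nat.pos_of_ne_zero ?_, by omega, hx⟩
      rintro rfl
      exact hx (zero_mem S)
  rw [hset, Set.ncard_coe_finset, hF]
  exact card_filter_range_succ_eq_half_of_reflect fun k hk =>
    not_congr (Nat.sub_sub_sub_mem_closure_pair_iff_notMem hcop h₁ h₂ hk)
end

section
/- Let a₁, a₂ be coprime integers greater than 1. Every integer x in the interval (0, a₁·a₂) not belonging to ⟨a₁, a₂⟩ and not divisible by a₁ or a₂ can be written uniquely as x = a₁·a₂ − k·a₂ − j·a₁ with integers 1 ≤ k < a₁ and 1 ≤ j < a₂. -/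
/-!
Reduce `x` modulo `a₁`: since `a₂` is invertible mod `a₁`, some `0 ≤ k < a₁` makes
`x + k a₂ = a₁ t`, and `k ≠ 0` because `a₁ ∤ x`. If `t ≥ a₂`, then
`x = (t - a₂) a₁ + (a₁ - k) a₂` would lie in `⟨a₁, a₂⟩`; hence `j := a₂ - t` is positive,
giving `x + k a₂ + j a₁ = a₁ a₂`. Uniqueness: two such representations differ by
`(k - k') a₂ = (j' - j) a₁`, so `a₁ ∣ k - k'`, forcing `k = k'` as both lie in `[0, a₁)`.
-/

namespace Nat.Coprime

variable {a b : ℕ}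

theorem exists_lt_dvd_add_mul (hab : Coprime a b) (ha : 0 < a) (x : ℕ) :
    ∃ k < a, a ∣ x + k * b := by
  obtain ⟨c, rfl⟩ : ∃ c, a = c + 1 := ⟨a - 1, by omega⟩
  -- `k b ≡ c x ≡ -x`
  obtain ⟨k, hk, hmod⟩ := Nat.exists_mul_mod_eq_of_coprime (c * x) hab.symm ha.ne'
  refine ⟨k, hk, Nat.modEq_zero_iff_dvd.mp ?_⟩
  calc x + k * b ≡ x + c * x [MOD c + 1] := Nat.ModEq.add_left _ (by rw [mul_comm]; exact hmod)
    _ = (c + 1) * x := by ring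
    _ ≡ 0 [MOD c + 1] := Nat.modEq_zero_iff_dvd.mpr (Nat.dvd_mul_right _ x)

theorem eq_of_mul_add_mul_eq {k k' j j' : ℕ} (hab : Coprime a b) (hk : k < a) (hk' : k' < a)
    (h : k * b + j * a = k' * b + j' * a) : k = k' ∧ j = j' := by
  have hmod : k * b ≡ k' * b [MOD a] := by
    simpa [Nat.ModEq, Nat.add_mul_mod_self_right] using congrArg (· % a) h
  obtain rfl : k = k' := (hmod.cancel_right_of_coprime hab).eq_of_lt_of_lt hk hk'
  exact ⟨rfl, Nat.eq_of_mul_eq_mul_right (by omega) (Nat.add_left_cancel h)⟩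

theorem exists_add_mul_add_mul_eq_mul_of_notMem (hab : Coprime a b) (ha : 0 < a) {x : ℕ}
    (hxS : ¬ ∃ l₁ l₂ : ℕ, x = l₁ * a + l₂ * b) (hd : ¬ a ∣ x) :
    ∃ k j : ℕ, 1 ≤ k ∧ k < a ∧ 1 ≤ j ∧ j < b ∧ x + k * b + j * a = a * b := by
  obtain ⟨k, hka, t, ht⟩ := hab.exists_lt_dvd_add_mul ha x
  have hk0 : k ≠ 0 := by
    rintro rfl
    exact hd ⟨t, by simpa using ht⟩
  have ht0 : t ≠ 0 := by
    rintro rfl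
    exact hd ⟨0, by omega⟩
  have htb : t < b := by
    by_contra! hbt
    refine hxS ⟨t - b, a - k, ?_⟩
    zify [hbt, hka.le] at ht ⊢
    linear_combination ht
  refine ⟨k, b - t, by omega, hka, by omega, by omega, ?_⟩
  zify [htb.le] at ht ⊢
  linear_combination ht

end Nat.Coprime

theorem stmt_8_general (a₁ a₂ : ℕ) (h₁ : 1 < a₁)
    (hcop : Nat.gcd a₁ a₂ = 1) (x : ℕ)
    (hxS : ¬ ∃ l₁ l₂ : ℕ, x = l₁ * a₁ + l₂ * a₂)
    (hd₁ : ¬ a₁ ∣ x) :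
    ∃! p : ℕ × ℕ, 1 ≤ p.1 ∧ p.1 < a₁ ∧ 1 ≤ p.2 ∧ p.2 < a₂ ∧
      (x : ℤ) = (a₁ : ℤ) * a₂ - p.1 * a₂ - p.2 * a₁ := by
  have hab : Nat.Coprime a₁ a₂ := hcop
  have eq_iff (k j : ℕ) :
      (x : ℤ) = a₁ * a₂ - k * a₂ - j * a₁ ↔ x + k * a₂ + j * a₁ = a₁ * a₂ := by
    zify
    constructor <;> intro h <;> linarith
  obtain ⟨k, j, hk1, hka, hj1, hjb, hsum⟩ :=
    hab.exists_add_mul_add_mul_eq_mul_of_notMem (by omega) hxS hd₁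
  refine ⟨(k, j), ⟨hk1, hka, hj1, hjb, (eq_iff k j).2 hsum⟩, ?_⟩
  rintro ⟨k', j'⟩ ⟨-, hk', -, -, hsum'⟩
  dsimp only at hk' hsum'
  have hsum' : x + k' * a₂ + j' * a₁ = a₁ * a₂ := (eq_iff k' j').1 hsum'
  obtain ⟨rfl, rfl⟩ := hab.eq_of_mul_add_mul_eq (j := j') (j' := j) hk' hka (by omega)
  rfl

theorem stmt_8 (a₁ a₂ : ℕ) (h₁ : 1 < a₁) (h₂ : 1 < a₂)
    (hcop : Nat.gcd a₁ a₂ = 1) (x : ℕ) (hx : 0 < x) (hxlt : x < a₁ * a₂)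
    (hxS : ¬ ∃ l₁ l₂ : ℕ, x = l₁ * a₁ + l₂ * a₂)
    (hd₁ : ¬ a₁ ∣ x) (hd₂ : ¬ a₂ ∣ x) :
    ∃! p : ℕ × ℕ, 1 ≤ p.1 ∧ p.1 < a₁ ∧ 1 ≤ p.2 ∧ p.2 < a₂ ∧
      (x : ℤ) = (a₁ : ℤ) * a₂ - p.1 * a₂ - p.2 * a₁ :=
  stmt_8_general a₁ a₂ h₁ hcop x hxS hd₁
end

section
/- Let a, d, h be positive integers with gcd(a, d) = 1 and a odd, a ≥ 3. Then every Pseudo-Frobenius number of the numerical semigroup S = ⟨a, h·a+d, h·a+2d⟩ belongs to the set {a·(h·a+2d) − a − ((a−1)/2 + 1)·(h·a+2d), a·(h·a+2d) − (h·(a−1)/2 + d + 1)·a − (h·a+2d)}. -/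
set_option maxHeartbeats 1000000

/-- The element `((r+1)/2)*(h*a) + r*d + a*t` lies in the semigroup. -/
lemma mem_w (a d h r t : ℕ) :
    ∃ l₁ l₂ l₃ : ℕ, ((r + 1) / 2) * (h * a) + r * d + a * t
      = l₁ * a + l₂ * (h * a + d) + l₃ * (h * a + 2 * d) := by
  refine ⟨t, r % 2, r / 2, ?_⟩
  rcases Nat.even_or_odd r with ⟨m, hm⟩ | ⟨m, hm⟩
  · subst hm
    have e1 : (m + m + 1) / 2 = m := by omega
    have e2 : (m + m) % 2 = 0 := by omega
    have e3 : (m + m) / 2 = m := by omega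
    rw [e1, e2, e3]; ring
  · subst hm
    have e1 : (2 * m + 1 + 1) / 2 = m + 1 := by omega
    have e2 : (2 * m + 1) % 2 = 1 := by omega
    have e3 : (2 * m + 1) / 2 = m := by omega
    rw [e1, e2, e3]; ring

/-- Every element of the semigroup has the form `((r+1)/2)*(h*a) + r*d + a*t` with `r < a`. -/
lemma struct_w (a d h n l₁ l₂ l₃ : ℕ) (ha : 0 < a)
    (hn : n = l₁ * a + l₂ * (h * a + d) + l₃ * (h * a + 2 * d)) :
    ∃ r t : ℕ, r < a ∧ n = ((r + 1) / 2) * (h * a) + r * d + a * t := by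
  obtain ⟨r, q, hrlt, hdm⟩ : ∃ r q : ℕ, r < a ∧ a * q + r = l₂ + 2 * l₃ :=
    ⟨(l₂ + 2 * l₃) % a, (l₂ + 2 * l₃) / a, Nat.mod_lt _ ha, Nat.div_add_mod _ _⟩
  have hle : r ≤ l₂ + 2 * l₃ := hdm ▸ Nat.le_add_left r (a * q)
  have h2 : (r + 1) / 2 ≤ l₂ + l₃ := by omega
  obtain ⟨c, hc⟩ : ∃ c, l₂ + l₃ = (r + 1) / 2 + c := ⟨l₂ + l₃ - (r + 1) / 2, by omega⟩
  refine ⟨r, l₁ + c * h + q * d, hrlt, ?_⟩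
  have hn' : n = l₁ * a + (l₂ + l₃) * (h * a) + (l₂ + 2 * l₃) * d := by rw [hn]; ring
  rw [hn', hc, ← hdm]; ring

theorem stmt_12 (a d h : ℕ) (ha : 3 ≤ a) (haodd : Odd a) (hd : 0 < d)
    (hh : 1 ≤ h) (hcop : Nat.gcd a d = 1)
    (x : ℕ)
    (hT : (¬ ∃ l₁ l₂ l₃ : ℕ, x = l₁ * a + l₂ * (h * a + d) + l₃ * (h * a + 2 * d)) ∧
      ∀ s : ℕ, (∃ l₁ l₂ l₃ : ℕ, s = l₁ * a + l₂ * (h * a + d) + l₃ * (h * a + 2 * d)) →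
        0 < s → ∃ l₁ l₂ l₃ : ℕ, x + s = l₁ * a + l₂ * (h * a + d) + l₃ * (h * a + 2 * d)) :
    (x : ℤ) = (a : ℤ) * (h * a + 2 * d) - a - ((a - 1) / 2 + 1) * (h * a + 2 * d) ∨
    (x : ℤ) = (a : ℤ) * (h * a + 2 * d) - (h * ((a - 1) / 2) + d + 1) * a - (h * a + 2 * d) := by
  obtain ⟨hx, hstep⟩ := hT
  have hapos : 0 < a := by omega
  -- x + a is in S
  obtain ⟨l₁, l₂, l₃, hxa⟩ := hstep a ⟨1, 0, 0, by ring⟩ hapos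
  obtain ⟨r, t, hrlt, heq0⟩ := struct_w a d h (x + a) l₁ l₂ l₃ hapos hxa
  -- t must be 0, else x itself would be in S
  rcases Nat.eq_zero_or_pos t with ht | ht
  swap
  · exfalso
    obtain ⟨t', rfl⟩ : ∃ t', t = t' + 1 := ⟨t - 1, by omega⟩
    obtain ⟨l₁', l₂', l₃', hw⟩ := mem_w a d h r t'
    refine hx ⟨l₁', l₂', l₃', ?_⟩
    rw [← hw]
    have h5 : x + a = (((r + 1) / 2) * (h * a) + r * d + a * t') + a := by rw [heq0]; ring
    exact Nat.add_right_cancel h5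
  have heqx : x + a = ((r + 1) / 2) * (h * a) + r * d := by
    rw [ht, Nat.mul_zero, Nat.add_zero] at heq0; exact heq0
  obtain ⟨k, hk⟩ := haodd
  have hk1 : 1 ≤ k := by omega
  rcases (show r + 2 < a ∨ r = a - 2 ∨ r = a - 1 by omega) with h3 | h3 | h3
  · -- middle residues: contradiction using s = h*a + 2*d
    exfalso
    have hNpos : 0 < h * a + 2 * d := Nat.lt_of_lt_of_le (by omega : 0 < 2 * d) (Nat.le_add_left _ _)
    obtain ⟨m₁, m₂, m₃, hm⟩ := hstep (h * a + 2 * d) ⟨0, 0, 1, by ring⟩ hNpos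
    obtain ⟨r', t', hr'lt, heq'⟩ := struct_w a d h (x + (h * a + 2 * d)) m₁ m₂ m₃ hapos hm
    have eZ : (x : ℤ) + a = (((r + 1) / 2 : ℕ) : ℤ) * (h * a) + r * d := by exact_mod_cast heqx
    have eZ' : (x : ℤ) + (h * a + 2 * d)
        = (((r' + 1) / 2 : ℕ) : ℤ) * (h * a) + r' * d + a * t' := by exact_mod_cast heq'
    have hdvd : (a : ℤ) ∣ (((r : ℤ) + 2) - r') * d :=
      ⟨(((r' + 1) / 2 : ℕ) : ℤ) * h + t' + 1 - (((r + 1) / 2 : ℕ) : ℤ) * h - h, by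
        linear_combination eZ' - eZ⟩
    have hcopZ : IsCoprime (a : ℤ) (d : ℤ) := Nat.isCoprime_iff_coprime.mpr hcop
    have hdvd2 : (a : ℤ) ∣ (((r : ℤ) + 2) - r') := hcopZ.dvd_of_dvd_mul_right hdvd
    have hb1 : ((r : ℤ) + 2) < a := by exact_mod_cast (show (r + 2 : ℕ) < a from h3)
    have hb2 : (r' : ℤ) < a := by exact_mod_cast hr'lt
    have hb3 : (0 : ℤ) ≤ (r' : ℤ) := Int.natCast_nonneg _
    have hb4 : (0 : ℤ) ≤ (r : ℤ) := Int.natCast_nonneg _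
    have hzero : ((r : ℤ) + 2) - r' = 0 :=
      Int.eq_zero_of_abs_lt_dvd hdvd2 (by rw [abs_lt]; constructor <;> linarith)
    have hr'eq : r' = r + 2 := by
      have : (r' : ℤ) = (r : ℤ) + 2 := by linarith
      exact_mod_cast this
    subst hr'eq
    have hB : (r + 2 + 1) / 2 = (r + 1) / 2 + 1 := by omega
    rw [hB] at eZ'
    push_cast at eZ eZ'
    have hta : (0 : ℤ) ≤ (a : ℤ) * t' := by positivity
    have hao : (0 : ℤ) < (a : ℤ) := by exact_mod_cast hapos
    nlinarith [eZ, eZ']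
  · -- r = a - 2 : second pseudo-Frobenius number
    right
    subst h3
    have hr2 : (a - 2 + 1) / 2 = k := by omega
    rw [hr2] at heqx
    have h5 : (a - 2) * d + d = 2 * k * d := by
      calc (a - 2) * d + d = ((a - 2) + 1) * d := by ring
        _ = (2 * k) * d := by rw [(by omega : a - 2 + 1 = 2 * k)]
    have heqx2 : x + a + d = k * (h * a) + 2 * k * d := by
      rw [heqx, add_assoc, h5]
    have exZ : (x : ℤ) + a + d = k * ((h : ℤ) * a) + 2 * k * d := by exact_mod_cast heqx2
    have haz : (a : ℤ) = 2 * k + 1 := by exact_mod_cast hk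
    rw [haz] at exZ ⊢
    rw [(show ((2 * (k : ℤ) + 1) - 1) / 2 = (k : ℤ) by omega)]
    linear_combination exZ
  · -- r = a - 1 : first pseudo-Frobenius number
    left
    subst h3
    have hr2 : (a - 1 + 1) / 2 = k := by omega
    have hr3 : a - 1 = 2 * k := by omega
    rw [hr2, hr3] at heqx
    have exZ : (x : ℤ) + a = k * ((h : ℤ) * a) + 2 * k * d := by exact_mod_cast heqx
    have haz : (a : ℤ) = 2 * k + 1 := by exact_mod_cast hk
    rw [haz] at exZ ⊢
    rw [(show ((2 * (k : ℤ) + 1) - 1) / 2 = (k : ℤ) by omega)]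
    linear_combination exZ
end

section
/- Let a, d be coprime positive integers with a odd, a ≥ 3, and h ≥ 1. The Frobenius number of S = ⟨a, h·a+d, h·a+2d⟩ is F(S) = a·(h·a+2d) − a − ((a−1)/2 + 1)·(h·a+2d); i.e., this number is not in S, and every larger integer is in S. -/
/-! With `s = l₂ + l₃` and `t = l₂ + 2 l₃`, the combination `l₁ a + l₂ (h a + d) + l₃ (h a + 2 d)`
equals `(l₁ + s h) a + t d` with `t ≤ 2 s`, so its class modulo `a = 2 m + 1` is that of `t d`.
Since `d` is invertible modulo `a`, every class is reached by exactly one `t ≤ 2 m`, and the least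
element reaching it is `⌈t / 2⌉ h a + t d`. The largest of these least elements is
`m (h a + 2 d)`, attained at `t = 2 m`, so the Frobenius number is `m (h a + 2 d) - a`. -/

lemma exists_lt_natCast_mul_modEq {a d : ℕ} (ha : 0 < a) (hcop : a.Coprime d) (n : ℤ) :
    ∃ t < a, (t * d : ℤ) ≡ n [ZMOD a] := by
  have : NeZero a := ⟨ha.ne'⟩
  refine ⟨(n * (d : ZMod a)⁻¹ : ZMod a).val, ZMod.val_lt _, ?_⟩
  rw [← ZMod.intCast_eq_intCast_iff]
  push_cast
  rw [ZMod.natCast_zmod_val, mul_assoc, mul_comm _ (d : ZMod a),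
    ZMod.coe_mul_inv_eq_one d hcop.symm, mul_one]

lemma Int.exists_natCast_mul_eq_of_dvd_of_neg_lt {a N : ℤ} (ha : 0 < a) (hdvd : a ∣ N)
    (hN : -a < N) : ∃ l : ℕ, N = l * a := by
  obtain ⟨c, rfl⟩ := hdvd
  have hc : 0 ≤ c := by nlinarith
  exact ⟨c.toNat, by rw [Int.toNat_of_nonneg hc, mul_comm]⟩

namespace ArithmeticProgressionSemigroup

variable {a d h m : ℕ}

theorem combination_eq (l₂ l₃ : ℕ) :
    (l₂ * (h * a + d) + l₃ * (h * a + 2 * d) : ℤ)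
      = ((l₂ + l₃ : ℕ) : ℤ) * h * a + ((l₂ + 2 * l₃ : ℕ) : ℤ) * d := by
  push_cast; ring

theorem mul_sub_ne_combination (ham : 2 * m < a) (hcop : a.Coprime d) (l₁ l₂ l₃ : ℕ) :
    (m * (h * a + 2 * d) - a : ℤ) ≠ l₁ * a + l₂ * (h * a + d) + l₃ * (h * a + 2 * d) := by
  intro heq
  rw [add_assoc, combination_eq] at heq
  set s := l₂ + l₃
  set t := l₂ + 2 * l₃
  have hmod : t * d ≡ 2 * m * d [MOD a] := by
    rw [← Int.natCast_modEq_iff, Int.modEq_iff_dvd]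
    exact ⟨l₁ + s * h - m * h + 1, by push_cast; linear_combination heq⟩
  have ht : 2 * m ≤ t := by
    have := (hmod.cancel_right_of_coprime hcop).symm
    rw [Nat.ModEq, Nat.mod_eq_of_lt ham] at this
    exact this ▸ Nat.mod_le t a
  have hs : (m : ℤ) ≤ s := by exact_mod_cast (by omega : m ≤ s)
  have : (m * h * a + 2 * m * d : ℤ) ≤ s * h * a + t * d := by
    have ht : (2 * m : ℤ) ≤ t := by exact_mod_cast ht
    gcongr
  have : (0 : ℤ) ≤ l₁ * a := by positivity
  linarith

theorem exists_combination_of_mul_sub_lt (ha : 0 < a) (ham : a ≤ 2 * m + 1)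
    (hcop : a.Coprime d) {n : ℤ} (hn : m * (h * a + 2 * d) - a < n) :
    ∃ l₁ l₂ l₃ : ℕ, n = l₁ * a + l₂ * (h * a + d) + l₃ * (h * a + 2 * d) := by
  obtain ⟨t, hta, htn⟩ := exists_lt_natCast_mul_modEq ha hcop n
  obtain ⟨l₁, hl₁⟩ : ∃ l₁ : ℕ, n - (((t % 2 + t / 2 : ℕ) : ℤ) * h * a + t * d) = l₁ * a := by
    apply Int.exists_natCast_mul_eq_of_dvd_of_neg_lt (by exact_mod_cast ha)
    · rw [add_comm, ← sub_sub]
      exact (Int.modEq_iff_dvd.mp htn).sub (dvd_mul_left _ _)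
    · have hs : ((t % 2 + t / 2 : ℕ) : ℤ) ≤ m := by exact_mod_cast (by omega : t % 2 + t / 2 ≤ m)
      have ht : (t : ℤ) ≤ 2 * m := by exact_mod_cast (by omega : t ≤ 2 * m)
      have : ((t % 2 + t / 2 : ℕ) * h * a + t * d : ℤ) ≤ m * h * a + 2 * m * d := by gcongr
      linarith
  refine ⟨l₁, t % 2, t / 2, ?_⟩
  rw [add_assoc, combination_eq, Nat.mod_add_div t 2]
  linear_combination hl₁

end ArithmeticProgressionSemigroup

open ArithmeticProgressionSemigroup

theorem stmt_13_general (a d h : ℕ) (haodd : Odd a) (hcop : Nat.gcd a d = 1) :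
    (¬ ∃ l₁ l₂ l₃ : ℕ, ((a : ℤ) * (h * a + 2 * d) - a - ((a - 1) / 2 + 1) * (h * a + 2 * d))
        = l₁ * a + l₂ * (h * a + d) + l₃ * (h * a + 2 * d)) ∧
    ∀ n : ℤ, (a : ℤ) * (h * a + 2 * d) - a - ((a - 1) / 2 + 1) * (h * a + 2 * d) < n →
      ∃ l₁ l₂ l₃ : ℕ, n = l₁ * a + l₂ * (h * a + d) + l₃ * (h * a + 2 * d) := by
  obtain ⟨m, hm⟩ := haodd
  have hF : (a : ℤ) * (h * a + 2 * d) - a - ((a - 1) / 2 + 1) * (h * a + 2 * d)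
      = m * (h * a + 2 * d) - a := by
    have hhalf : ((a : ℤ) - 1) / 2 = m := by omega
    rw [hhalf, hm]
    push_cast
    ring
  rw [hF]
  exact ⟨fun ⟨l₁, l₂, l₃, heq⟩ => mul_sub_ne_combination (by omega) hcop l₁ l₂ l₃ heq,
    fun _ hn => exists_combination_of_mul_sub_lt (by omega) hm.le hcop hn⟩

theorem stmt_13 (a d h : ℕ) (ha : 3 ≤ a) (haodd : Odd a) (hd : 0 < d)
    (hh : 1 ≤ h) (hcop : Nat.gcd a d = 1) :
    (¬ ∃ l₁ l₂ l₃ : ℕ, ((a : ℤ) * (h * a + 2 * d) - a - ((a - 1) / 2 + 1) * (h * a + 2 * d))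
        = l₁ * a + l₂ * (h * a + d) + l₃ * (h * a + 2 * d)) ∧
    ∀ n : ℤ, (a : ℤ) * (h * a + 2 * d) - a - ((a - 1) / 2 + 1) * (h * a + 2 * d) < n →
      ∃ l₁ l₂ l₃ : ℕ, n = l₁ * a + l₂ * (h * a + d) + l₃ * (h * a + 2 * d) :=
  stmt_13_general a d h haodd hcop
end

section
/- Let a = 3k + j with k ≥ 1 and j ∈ {1, 2}, and let i ∈ {1, 2}. Suppose S = ⟨a, a+1, i·a+3⟩ is a numerical semigroup minimally generated by these three elements. Then a² − (k·(3−i) + 1)·a − 1 is a Pseudo-Frobenius number of S, i.e., it is not in S but adding any positive element of S to it yields an element of S. -/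
/-!
Write `M = i k + j - 1`; the hypothesis on `x` says exactly `x + 1 = M a`. A representation
`x = l₁ a + l₂ (a + 1) + l₃ (i a + 3)` would give `x + 1 = (l₁ + l₂ + i l₃) a + (l₂ + 3 l₃ + 1)`,
so `a` divides `l₂ + 3 l₃ + 1`, forcing `l₂ + 3 l₃ ≥ a - 1 = 3 k + j - 1` and hence
`l₂ + i l₃ ≥ M`, which leaves no room in `M a`. On the other hand `x` plus each generator is
explicitly in `S`: `x + a = (j - 1)(a + 1) + k (i a + 3)`, `x + (a + 1) = (M + 1) a` and
`x + (i a + 3) = (M + i - 2) a + 2 (a + 1)`.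
-/

def InSemigroup (A B C s : ℕ) : Prop := ∃ l₁ l₂ l₃ : ℕ, s = l₁ * A + l₂ * B + l₃ * C

def IsPseudoFrobenius (A B C x : ℕ) : Prop :=
  ¬ InSemigroup A B C x ∧ ∀ s, InSemigroup A B C s → 0 < s → InSemigroup A B C (x + s)

namespace InSemigroup

variable {A B C : ℕ}

theorem add {s t : ℕ} (hs : InSemigroup A B C s) (ht : InSemigroup A B C t) :
    InSemigroup A B C (s + t) := by
  obtain ⟨l₁, l₂, l₃, rfl⟩ := hs
  obtain ⟨m₁, m₂, m₃, rfl⟩ := ht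
  exact ⟨l₁ + m₁, l₂ + m₂, l₃ + m₃, by ring⟩

theorem add_of_add_generators {x s : ℕ} (hxA : InSemigroup A B C (x + A))
    (hxB : InSemigroup A B C (x + B)) (hxC : InSemigroup A B C (x + C))
    (hs : InSemigroup A B C s) (hpos : 0 < s) : InSemigroup A B C (x + s) := by
  obtain ⟨l₁, l₂, l₃, rfl⟩ := hs
  rcases l₁ with _ | l₁
  · rcases l₂ with _ | l₂
    · rcases l₃ with _ | l₃
      · simp at hpos
      · convert hxC.add (⟨0, 0, l₃, by ring⟩ : InSemigroup A B C (l₃ * C)) using 1; ring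
    · convert hxB.add ⟨0, l₂, l₃, rfl⟩ using 1; ring
  · convert hxA.add ⟨l₁, l₂, l₃, rfl⟩ using 1; ring

end InSemigroup

theorem not_inSemigroup_of_add_one_eq_mul {i k j a x : ℕ} (hi : i = 1 ∨ i = 2)
    (hj : j = 1 ∨ j = 2) (ha : a = 3 * k + j) (hx : x + 1 = (i * k + j - 1) * a) :
    ¬ InSemigroup a (a + 1) (i * a + 3) x := by
  rintro ⟨l₁, l₂, l₃, rfl⟩
  have hsum : (l₁ + l₂ + i * l₃) * a + (l₂ + 3 * l₃ + 1) = (i * k + j - 1) * a := by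
    rw [← hx]; ring
  have hlt : l₁ + l₂ + i * l₃ < i * k + j - 1 :=
    Nat.lt_of_mul_lt_mul_right (hsum ▸ Nat.lt_add_of_pos_right (Nat.succ_pos _))
  have hle : a ≤ l₂ + 3 * l₃ + 1 :=
    Nat.le_of_dvd (Nat.succ_pos _)
      ((Nat.dvd_add_right (dvd_mul_left a _)).mp (hsum ▸ dvd_mul_left a _))
  rcases hi with rfl | rfl <;> omega

theorem isPseudoFrobenius_of_add_one_eq_mul {i k j a x : ℕ} (hk : 1 ≤ k) (hi : i = 1 ∨ i = 2)
    (hj : j = 1 ∨ j = 2) (ha : a = 3 * k + j) (hx : x + 1 = (i * k + j - 1) * a) :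
    IsPseudoFrobenius a (a + 1) (i * a + 3) x := by
  have hM : 1 ≤ i * k + j := by omega
  have hM' : 2 ≤ i * k + j - 1 + i := by rcases hi with rfl | rfl <;> omega
  have ha' : (a : ℤ) = 3 * k + j := mod_cast ha
  refine ⟨not_inSemigroup_of_add_one_eq_mul hi hj ha hx, fun s =>
    InSemigroup.add_of_add_generators ⟨0, j - 1, k, ?_⟩ ⟨i * k + j, 0, 0, ?_⟩
      ⟨i * k + j - 1 + i - 2, 2, 0, ?_⟩⟩ <;>
    zify [hM, hM', show 1 ≤ j by omega] at hx ⊢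
  · linear_combination hx + ha'
  · linear_combination hx
  · linear_combination hx

theorem add_one_eq_mul_of_cast_eq {i k j a x : ℕ} (hj : j = 1 ∨ j = 2) (ha : a = 3 * k + j)
    (hx : (x : ℤ) = (a : ℤ) ^ 2 - (k * (3 - i) + 1) * a - 1) :
    x + 1 = (i * k + j - 1) * a := by
  have hj1 : 1 ≤ i * k + j := by omega
  have ha' : (a : ℤ) = 3 * k + j := mod_cast ha
  zify [hj1]
  linear_combination hx + (a : ℤ) * ha'

theorem stmt_14_general (k j i a : ℕ) (hk : 1 ≤ k) (hj : j = 1 ∨ j = 2)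
    (hi : i = 1 ∨ i = 2) (hA : a = 3 * k + j)
    (x : ℕ) (hx : (x : ℤ) = (a : ℤ) ^ 2 - (k * (3 - i) + 1) * a - 1) :
    (¬ ∃ l₁ l₂ l₃ : ℕ, x = l₁ * a + l₂ * (a + 1) + l₃ * (i * a + 3)) ∧
    ∀ s : ℕ, (∃ l₁ l₂ l₃ : ℕ, s = l₁ * a + l₂ * (a + 1) + l₃ * (i * a + 3)) →
      0 < s → ∃ l₁ l₂ l₃ : ℕ, x + s = l₁ * a + l₂ * (a + 1) + l₃ * (i * a + 3) :=
  isPseudoFrobenius_of_add_one_eq_mul hk hi hj hA (add_one_eq_mul_of_cast_eq hj hA hx)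

theorem stmt_14 (k j i a : ℕ) (hk : 1 ≤ k) (hj : j = 1 ∨ j = 2)
    (hi : i = 1 ∨ i = 2) (hA : a = 3 * k + j)
    (hmin₁ : ¬ ∃ l₂ l₃ : ℕ, a = l₂ * (a + 1) + l₃ * (i * a + 3))
    (hmin₂ : ¬ ∃ l₁ l₃ : ℕ, a + 1 = l₁ * a + l₃ * (i * a + 3))
    (hmin₃ : ¬ ∃ l₁ l₂ : ℕ, i * a + 3 = l₁ * a + l₂ * (a + 1))
    (x : ℕ) (hx : (x : ℤ) = (a : ℤ) ^ 2 - (k * (3 - i) + 1) * a - 1) :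
    (¬ ∃ l₁ l₂ l₃ : ℕ, x = l₁ * a + l₂ * (a + 1) + l₃ * (i * a + 3)) ∧
    ∀ s : ℕ, (∃ l₁ l₂ l₃ : ℕ, s = l₁ * a + l₂ * (a + 1) + l₃ * (i * a + 3)) →
      0 < s → ∃ l₁ l₂ l₃ : ℕ, x + s = l₁ * a + l₂ * (a + 1) + l₃ * (i * a + 3) :=
  stmt_14_general k j i a hk hj hi hA x hx
end

section
/- Let a₁, a₂, …, aₙ be positive integers with gcd(a₁,…,aₙ) = 1, let d = gcd(a₂, …, aₙ) and write aⱼ = d·a'ⱼ for j ≥ 2. Then the Frobenius numbers satisfy F(⟨a₁, a₂, …, aₙ⟩) = d·F(⟨a₁, a'₂, …, a'ₙ⟩) + a₁·(d − 1). -/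
/-!
Write a representation of `x` by `a₁, d·a'₂, …, d·a'ₙ` as `x = l₀ a₁ + d·(…)` and split `l₀ = c + d q`
with `c < d`: then `x = c a₁ + d y` with `y` representable by `a₁, a'₂, …, a'ₙ`. Since `a₁` is a unit
mod `d`, the residue `c` is determined by `x`, so `x` is a gap exactly when `x < c a₁` or `y` is a gap.
The largest gap therefore has `c = d - 1` and `y = F(⟨a₁, a'₂, …, a'ₙ⟩)`.
-/

def semigroupOf {n : ℕ} (a₁ : ℕ) (a : Fin n → ℕ) : Set ℕ :=
  {x | ∃ (l₀ : ℕ) (l : Fin n → ℕ), x = l₀ * a₁ + ∑ i, l i * a i}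

lemma mem_semigroupOf_mul_iff {n a₁ d x : ℕ} (b : Fin n → ℕ) (hd : 0 < d) :
    x ∈ semigroupOf a₁ (fun i => d * b i) ↔
      ∃ c < d, ∃ y ∈ semigroupOf a₁ b, x = c * a₁ + d * y := by
  have hsum : ∀ l : Fin n → ℕ, ∑ i, l i * (d * b i) = d * ∑ i, l i * b i := fun l => by
    rw [Finset.mul_sum]
    exact Finset.sum_congr rfl fun i _ => mul_left_comm _ _ _
  constructor
  · rintro ⟨l₀, l, rfl⟩
    refine ⟨l₀ % d, Nat.mod_lt _ hd, l₀ / d * a₁ + ∑ i, l i * b i, ⟨l₀ / d, l, rfl⟩, ?_⟩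
    conv_lhs => rw [hsum, ← Nat.mod_add_div l₀ d]
    ring
  · rintro ⟨c, -, y, ⟨l₀, l, rfl⟩, rfl⟩
    exact ⟨c + d * l₀, l, by rw [hsum]; ring⟩

theorem isGreatest_not_mul_add_mul {a₁ d F : ℕ} {T : Set ℕ} (hcop : Nat.gcd a₁ d = 1)
    (hd : 0 < d) (hF : IsGreatest Tᶜ F) :
    IsGreatest {x | ¬ ∃ c < d, ∃ y ∈ T, x = c * a₁ + d * y} (d * F + a₁ * (d - 1)) := by
  constructor
  · rintro ⟨c, hc, y, hy, hxy⟩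
    have hmod : a₁ * (d - 1) ≡ a₁ * c [MOD d] := by
      have := congrArg (· % d) hxy
      simp only [Nat.mul_add_mod_self_left, Nat.add_mul_mod_self_left] at this
      rwa [mul_comm c] at this
    have hc' : c = d - 1 :=
      ((Nat.ModEq.cancel_left_of_coprime (Nat.gcd_comm a₁ d ▸ hcop) hmod).eq_of_lt_of_lt
        (by omega) hc).symm
    subst hc'
    have hFy : F = y := Nat.eq_of_mul_eq_mul_left hd (by rw [mul_comm (d - 1) a₁] at hxy; omega)
    exact hF.1 (hFy ▸ hy)
  · intro x hx
    obtain ⟨c, hc, hcx⟩ := Nat.exists_mul_mod_eq_of_coprime x hcop hd.ne'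
    have hca : c * a₁ ≤ (d - 1) * a₁ := Nat.mul_le_mul_right _ (by omega)
    by_cases hlt : x < c * a₁
    · nlinarith
    obtain ⟨y, hy⟩ := (Nat.modEq_iff_dvd' (not_lt.mp hlt)).mp
      (show c * a₁ ≡ x [MOD d] by rwa [mul_comm] at hcx)
    have hyF : y ≤ F := hF.2 fun hyT => hx ⟨c, hc, y, hyT, by omega⟩
    calc x = c * a₁ + d * y := by omega
      _ ≤ (d - 1) * a₁ + d * F := Nat.add_le_add hca (Nat.mul_le_mul_left d hyF)
      _ = d * F + a₁ * (d - 1) := by ring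

theorem stmt_18_general (n : ℕ) (a₁ : ℕ) (a : Fin n → ℕ) (d : ℕ) (hd : d = Finset.univ.gcd a)
    (hgcd : Nat.gcd a₁ d = 1)
    (F₁ F₂ : ℕ)
    (hF₁ : IsGreatest {x : ℕ | ¬ ∃ (l₀ : ℕ) (l : Fin n → ℕ),
      x = l₀ * a₁ + ∑ i, l i * a i} F₁)
    (hF₂ : IsGreatest {x : ℕ | ¬ ∃ (l₀ : ℕ) (l : Fin n → ℕ),
      x = l₀ * a₁ + ∑ i, l i * (a i / d)} F₂) :
    F₁ = d * F₂ + a₁ * (d - 1) := by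
  rcases Nat.eq_zero_or_pos d with rfl | hdpos
  · rw [Nat.gcd_zero_right] at hgcd
    exact absurd ⟨F₁, 0, by simp [hgcd]⟩ hF₁.1
  have ha : a = fun i => d * (a i / d) :=
    funext fun i => (Nat.mul_div_cancel' (hd ▸ Finset.gcd_dvd (Finset.mem_univ i))).symm
  have hgaps : (semigroupOf a₁ a)ᶜ =
      {x | ¬ ∃ c < d, ∃ y ∈ semigroupOf a₁ (fun i => a i / d), x = c * a₁ + d * y} := by
    ext x
    rw [Set.mem_compl_iff, ha, mem_semigroupOf_mul_iff _ hdpos, ← ha]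
    rfl
  refine hF₁.unique (?_ : IsGreatest (semigroupOf a₁ a)ᶜ _)
  rw [hgaps]
  exact isGreatest_not_mul_add_mul hgcd hdpos hF₂

theorem stmt_18 (n : ℕ) (a₁ : ℕ) (a : Fin n → ℕ) (ha₁ : 0 < a₁)
    (ha : ∀ i, 0 < a i) (d : ℕ) (hd : d = Finset.univ.gcd a)
    (hgcd : Nat.gcd a₁ d = 1)
    (F₁ F₂ : ℕ)
    (hF₁ : IsGreatest {x : ℕ | ¬ ∃ (l₀ : ℕ) (l : Fin n → ℕ),
      x = l₀ * a₁ + ∑ i, l i * a i} F₁)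
    (hF₂ : IsGreatest {x : ℕ | ¬ ∃ (l₀ : ℕ) (l : Fin n → ℕ),
      x = l₀ * a₁ + ∑ i, l i * (a i / d)} F₂) :
    F₁ = d * F₂ + a₁ * (d - 1) :=
  stmt_18_general n a₁ a d hd hgcd F₁ F₂ hF₁ hF₂
end
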